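/- Let M be a faithful multiplication R-module. If N is a quasi z°-submodule of M, then (N :_R M) is a z°-ideal of R. The converse holds when M is in addition finitely generated. -/

import Mathlib

variable {R : Type*} [CommRing R] {M : Type*} [AddCommGroup M] [Module R M]

/-- `M` is a multiplication module: every submodule is `IM` for some ideal `I`. -/
def IsMultiplicationModule (R M : Type*) [CommRing R] [AddCommGroup M] [Module R M] : Prop :=
  ∀ N : Submodule R M, ∃ I : Ideal R, N = I • (⊤ : Submodule R M)

/-- A prime submodule. -/
def Submodule.IsPrimeSubmodule (P : Submodule R M) : Prop :=
  P ≠ ⊤ ∧ ∀ (r : R) (m : M), r • m ∈ P → m ∈ P ∨ r ∈ P.colon ⊤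

/-- `M` is reduced: the intersection of all prime submodules is zero. -/
def IsReducedModule (R M : Type*) [CommRing R] [AddCommGroup M] [Module R M] : Prop :=
  sInf {P : Submodule R M | P.IsPrimeSubmodule} = ⊥

/-- A minimal prime submodule of `M`. -/
def Submodule.IsMinimalPrime (P : Submodule R M) : Prop :=
  P.IsPrimeSubmodule ∧ ∀ Q : Submodule R M, Q.IsPrimeSubmodule → Q ≤ P → Q = P

/-- `𝔓_K`: the intersection of all minimal prime submodules containing `K`
(equal to `M` if there are none). -/
def primeRad (K : Submodule R M) : Submodule R M :=
  sInf {P : Submodule R M | P.IsMinimalPrime ∧ K ≤ P}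

/-- `V(K)`: the set of minimal prime submodules containing `K`. -/
def Vset (K : Submodule R M) : Set (Submodule R M) :=
  {P : Submodule R M | P.IsMinimalPrime ∧ K ≤ P}

/-- A quasi `z°`-submodule. -/
def IsQuasiZSubmodule (N : Submodule R M) : Prop :=
  N ≠ ⊤ ∧ ∀ a ∈ N.colon ⊤, primeRad (Ideal.span {a} • (⊤ : Submodule R M)) ≤ N

/-- `𝔓_I` for an ideal: intersection of all minimal prime ideals of `R` containing `I`. -/
def idealPrimeRad (I : Ideal R) : Ideal R :=
  sInf {p : Ideal R | p ∈ minimalPrimes R ∧ I ≤ p}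

/-- A `z°`-ideal of `R`. -/
def IsZIdeal (I : Ideal R) : Prop :=
  I ≠ ⊤ ∧ ∀ a ∈ I, idealPrimeRad (Ideal.span {a}) ≤ I

/-- `(0 :_M J)` for an ideal `J`. -/
def pointAnn (J : Ideal R) : Submodule R M where
  carrier := {m : M | ∀ j ∈ J, j • m = 0}
  zero_mem' := by intro j _; simp
  add_mem' := by
    intro a b ha hb j hj
    rw [smul_add, ha j hj, hb j hj, add_zero]
  smul_mem' := by
    intro c m hm j hj
    rw [smul_comm, hm j hj, smul_zero]

/-! In a faithful multiplication module every submodule is `N = (N :_R M) M`, and for a prime `p`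
with `pM ≠ M` one has `(pM :_R M) = p`. Hence `P ↦ (P :_R M)` and `q ↦ qM` match the minimal prime
submodules containing `IM` with the minimal primes of `R` containing `I`, at least when every
`qM` is proper, which Nakayama's lemma guarantees for finitely generated `M`. This gives
`𝔓_I ≤ (𝔓_{IM} :_R M)` in general and equality in the finitely generated case; both directions
of the theorem follow by taking `I = Ra` and comparing with `N = (N :_R M) M`. -/

namespace Submodule

theorem colon_top_eq_top_iff {N : Submodule R M} : N.colon ⊤ = ⊤ ↔ N = ⊤ := by
  rw [colon_eq_top_iff_subset, Set.top_eq_univ, Set.univ_subset_iff, coe_eq_univ]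

theorem colon_top_smul_top_le (N : Submodule R M) : N.colon ⊤ • (⊤ : Submodule R M) ≤ N :=
  smul_le.2 fun _ hr m _ => mem_colon.1 hr m trivial

theorem le_colon_smul_top (I : Ideal R) : I ≤ (I • (⊤ : Submodule R M)).colon ⊤ :=
  fun _ hr => mem_colon.2 fun _ _ => smul_mem_smul hr trivial

theorem eq_colon_top_smul_top (hmul : IsMultiplicationModule R M) (N : Submodule R M) :
    N = N.colon ⊤ • (⊤ : Submodule R M) := by
  obtain ⟨I, rfl⟩ := hmul N
  exact le_antisymm (smul_mono_left (le_colon_smul_top I)) (colon_top_smul_top_le _)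

theorem IsPrimeSubmodule.colon_isPrime {P : Submodule R M} (hP : P.IsPrimeSubmodule) :
    (P.colon ⊤).IsPrime := by
  refine ⟨fun h => hP.1 (colon_top_eq_top_iff.1 h), fun {a b} hab => or_iff_not_imp_right.2 ?_⟩
  intro hb
  obtain ⟨m, hm⟩ : ∃ m, b • m ∉ P := by
    by_contra! h
    exact hb (mem_colon.2 fun m _ => h m)
  have habm : a • b • m ∈ P := by rw [← mul_smul]; exact mem_colon.1 hab m trivial
  exact (hP.2 a (b • m) habm).resolve_left hm

end Submodule

open Submodule

theorem faithfulSMul_of_bot_colon_top_eq_bot (h : (⊥ : Submodule R M).colon ⊤ = ⊥) :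
    FaithfulSMul R M := by
  rwa [← Module.annihilator_eq_bot, ← annihilator_top, ← bot_colon, top_coe]

theorem Ideal.smul_top_ne_top [Module.Finite R M] [FaithfulSMul R M] {I : Ideal R}
    (hI : I ≠ ⊤) : I • (⊤ : Submodule R M) ≠ ⊤ := by
  intro h
  obtain ⟨c, hc1, hc0⟩ := exists_sub_one_mem_and_smul_eq_zero_of_fg_of_le_smul
    I ⊤ Module.Finite.fg_top h.ge
  obtain rfl : c = 0 := FaithfulSMul.eq_of_smul_eq_smul fun m => by rw [hc0 m trivial, zero_smul]
  exact hI (I.eq_top_iff_one.2 (by simpa using I.neg_mem hc1))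

theorem colon_smul_top_of_isPrime [FaithfulSMul R M] (hmul : IsMultiplicationModule R M)
    {p : Ideal R} [hp : p.IsPrime] (hne : p • (⊤ : Submodule R M) ≠ ⊤) :
    (p • (⊤ : Submodule R M)).colon ⊤ = p := by
  refine le_antisymm (fun r hr => ?_) (le_colon_smul_top p)
  by_contra hrp
  obtain ⟨x, -, hx⟩ := SetLike.exists_of_lt hne.lt_top
  -- Some `s ∉ p` maps `M` into `R x`, because `R x = (R x :_R M) M ⊄ p M`.
  obtain ⟨s, hs, hsp⟩ : ∃ s ∈ (span R {x}).colon ⊤, s ∉ p :=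
    SetLike.not_le_iff_exists.1 fun hle =>
      hx (smul_mono_left hle ((eq_colon_top_smul_top hmul _).le (mem_span_singleton_self x)))
  have hsM : ∀ m : M, s • m ∈ span R {x} := fun m => mem_colon.1 hs m trivial
  have hsrx : s • r • x ∈ p • span R {x} := by
    let f := DistribSMul.toLinearMap R M s
    refine (map_smul'' p ⊤ f).le.trans (smul_mono_right p ?_)
      (mem_map_of_mem (mem_colon.1 hr x trivial))
    exact map_le_iff_le_comap.2 fun m _ => hsM m
  obtain ⟨q, hq, hqx⟩ := mem_smul_span_singleton.1 hsrx
  -- `s r x = q x` propagates to `s r (s m) = q (s m)` for all `m`, since `s m ∈ R x`.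
  have hsrs : s * r * s = q * s := FaithfulSMul.eq_of_smul_eq_smul fun m => by
    obtain ⟨t, ht⟩ := mem_span_singleton.1 (hsM m)
    calc (s * r * s) • m = s • r • s • m := by rw [mul_smul, mul_smul]
      _ = t • s • r • x := by rw [← ht, smul_comm r t, smul_comm s t]
      _ = q • s • m := by rw [← hqx, ← ht, smul_comm q t]
      _ = (q * s) • m := (mul_smul ..).symm
  have : s * r * s ∈ p := hsrs ▸ p.mul_mem_right s hq
  simp [hp.mul_mem_iff_mem_or_mem, hrp, hsp] at this

theorem isPrimeSubmodule_smul_top [FaithfulSMul R M] (hmul : IsMultiplicationModule R M)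
    {p : Ideal R} [hp : p.IsPrime] (hne : p • (⊤ : Submodule R M) ≠ ⊤) :
    (p • (⊤ : Submodule R M)).IsPrimeSubmodule := by
  have hcolon := colon_smul_top_of_isPrime hmul hne
  refine ⟨hne, fun r m hrm => or_iff_not_imp_right.2 fun hr => ?_⟩
  rw [hcolon] at hr
  have hle : (span R {m}).colon ⊤ ≤ p := fun t ht => by
    have hrt : r * t ∈ (p • (⊤ : Submodule R M)).colon ⊤ := mem_colon.2 fun y _ => by
      obtain ⟨c, hc⟩ := mem_span_singleton.1 (mem_colon.1 ht y trivial)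
      rw [mul_smul, ← hc, smul_comm]
      exact smul_mem _ c hrm
    rw [hcolon] at hrt
    exact (hp.mem_or_mem hrt).resolve_left hr
  exact smul_mono_left hle ((eq_colon_top_smul_top hmul _).le (mem_span_singleton_self m))

theorem Submodule.IsMinimalPrime.colon_mem_minimalPrimes [FaithfulSMul R M]
    (hmul : IsMultiplicationModule R M) {P : Submodule R M} (hP : P.IsMinimalPrime) :
    P.colon ⊤ ∈ minimalPrimes R := by
  have : (P.colon ⊤).IsPrime := hP.1.colon_isPrime
  obtain ⟨q, hq, hqP⟩ := Ideal.exists_minimalPrimes_le (bot_le (a := P.colon ⊤))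
  have : Ideal.IsPrime q := hq.1.1
  have hqM_le : q • (⊤ : Submodule R M) ≤ P :=
    (smul_mono_left hqP).trans (colon_top_smul_top_le P)
  have hqM_ne : q • (⊤ : Submodule R M) ≠ ⊤ := fun h => hP.1.1 (top_le_iff.1 (h ▸ hqM_le))
  rwa [← hP.2 _ (isPrimeSubmodule_smul_top hmul hqM_ne) hqM_le,
    colon_smul_top_of_isPrime hmul hqM_ne]

theorem isMinimalPrime_smul_top [FaithfulSMul R M] (hmul : IsMultiplicationModule R M)
    {q : Ideal R} (hq : q ∈ minimalPrimes R) (hne : q • (⊤ : Submodule R M) ≠ ⊤) :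
    (q • (⊤ : Submodule R M)).IsMinimalPrime := by
  have : Ideal.IsPrime q := hq.1.1
  refine ⟨isPrimeSubmodule_smul_top hmul hne, fun Q hQ hQq => ?_⟩
  have hle : Q.colon ⊤ ≤ q :=
    colon_smul_top_of_isPrime hmul hne ▸ colon_mono hQq subset_rfl
  rw [eq_colon_top_smul_top hmul Q, le_antisymm hle (hq.2 ⟨hQ.colon_isPrime, bot_le⟩ hle)]

theorem idealPrimeRad_le_colon_primeRad [FaithfulSMul R M] (hmul : IsMultiplicationModule R M)
    (I : Ideal R) : idealPrimeRad I ≤ (primeRad (I • (⊤ : Submodule R M))).colon ⊤ := by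
  intro r hr
  refine mem_colon.2 fun m _ => mem_sInf.2 fun P ⟨hPmin, hIP⟩ => ?_
  have hIP' : I ≤ P.colon ⊤ := (le_colon_smul_top I).trans (colon_mono hIP subset_rfl)
  have hrP := mem_sInf.1 hr _ ⟨IsMinimalPrime.colon_mem_minimalPrimes hmul hPmin, hIP'⟩
  exact mem_colon.1 hrP m trivial

theorem colon_primeRad_le_idealPrimeRad [Module.Finite R M] [FaithfulSMul R M]
    (hmul : IsMultiplicationModule R M) (I : Ideal R) :
    (primeRad (I • (⊤ : Submodule R M))).colon ⊤ ≤ idealPrimeRad I := by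
  intro r hr
  refine mem_sInf.2 fun q ⟨hq, hIq⟩ => ?_
  have : Ideal.IsPrime q := hq.1.1
  have hne : q • (⊤ : Submodule R M) ≠ ⊤ := Ideal.smul_top_ne_top Ideal.IsPrime.ne_top'
  have hle : primeRad (I • (⊤ : Submodule R M)) ≤ q • ⊤ :=
    sInf_le ⟨isMinimalPrime_smul_top hmul hq hne, smul_mono_left hIq⟩
  rw [← colon_smul_top_of_isPrime hmul hne]
  exact colon_mono hle subset_rfl hr

theorem stmt10 (hfaithful : (⊥ : Submodule R M).colon ⊤ = ⊥)
    (hmul : IsMultiplicationModule R M) (N : Submodule R M) :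
    (IsQuasiZSubmodule N → IsZIdeal (N.colon ⊤)) ∧
      (Module.Finite R M → IsZIdeal (N.colon ⊤) → IsQuasiZSubmodule N) := by
  have : FaithfulSMul R M := faithfulSMul_of_bot_colon_top_eq_bot hfaithful
  refine ⟨fun ⟨hN, hquasi⟩ => ⟨mt colon_top_eq_top_iff.1 hN, fun a ha => ?_⟩,
    fun _ ⟨hN, hz⟩ => ⟨mt colon_top_eq_top_iff.2 hN, fun a ha => ?_⟩⟩
  · exact (idealPrimeRad_le_colon_primeRad hmul _).trans (colon_mono (hquasi a ha) subset_rfl)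
  · calc primeRad (Ideal.span {a} • (⊤ : Submodule R M))
        = (primeRad (Ideal.span {a} • (⊤ : Submodule R M))).colon ⊤ • ⊤ :=
          eq_colon_top_smul_top hmul _
      _ ≤ idealPrimeRad (Ideal.span {a}) • ⊤ :=
          smul_mono_left (colon_primeRad_le_idealPrimeRad hmul _)
      _ ≤ N.colon ⊤ • ⊤ := smul_mono_left (hz a ha)
      _ ≤ N := colon_top_smul_top_le N
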